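/- arXiv:2506.14279 — 2 statements merged into one kernel-verified Lean document; each statement's English description precedes it below -/
import Mathlib

section
/- Let n ∈ ℕ be odd and of the form n = a² + 1 for some a ∈ ℕ. For H = B±(C_n), where C_n is a cyclic group of order n, one has a − 1 ∈ Δ*(H). (More precisely, if C_n = ⟨e⟩ and G₀ = {e, ae}, then min Δ(B±(G₀)) = a − 1.) -/
open Multiset

variable {G : Type*} [AddCommGroup G]

/-- `S` is a plus-minus weighted zero-sum sequence: `S` splits as `S₁ + S₂` with
`S₁.sum = S₂.sum`, i.e. some choice of signs `ε_i ∈ {+1, -1}` makes the weighted sum vanish. -/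
def IsPMZeroSum (S : Multiset G) : Prop :=
  ∃ S₁ S₂ : Multiset G, S = S₁ + S₂ ∧ S₁.sum = S₂.sum

/-- The monoid `B±(G₀)` of plus-minus weighted zero-sum sequences over `G₀ ⊆ G`, as an
additive submonoid of the free commutative monoid `Multiset G` of sequences over `G`. -/
def PMZS (G₀ : Set G) : AddSubmonoid (Multiset G) where
  carrier := {S | (∀ g ∈ S, g ∈ G₀) ∧ IsPMZeroSum S}
  zero_mem' := ⟨fun g hg => absurd hg (Multiset.notMem_zero g), 0, 0, by simp, rfl⟩
  add_mem' := by
    rintro S T ⟨hS, S₁, S₂, rfl, h12⟩ ⟨hT, T₁, T₂, rfl, h34⟩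
    exact ⟨fun g hg => (Multiset.mem_add.mp hg).elim (fun h => hS g h) (fun h => hT g h),
      S₁ + T₁, S₂ + T₂, add_add_add_comm S₁ S₂ T₁ T₂, by simp [h12, h34]⟩

/-- `A` is an atom (irreducible element) of the submonoid `H` of `Multiset G`. -/
def IsPMAtom (H : AddSubmonoid (Multiset G)) (A : Multiset G) : Prop :=
  A ∈ H ∧ A ≠ 0 ∧ ∀ B C : Multiset G, B ∈ H → C ∈ H → A = B + C → B = 0 ∨ C = 0

/-- The set of lengths `L(a)` of `a` in `H`: all `k` such that `a` is a sum of `k` atoms of `H`. -/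
def LengthSet (H : AddSubmonoid (Multiset G)) (a : Multiset G) : Set ℕ :=
  {k | ∃ l : List (Multiset G), (∀ A ∈ l, IsPMAtom H A) ∧ l.sum = a ∧ l.length = k}

/-- The set of successive distances `Δ(L)` of a set `L ⊆ ℕ`. -/
def DistSet (L : Set ℕ) : Set ℕ :=
  {d | 0 < d ∧ ∃ a ∈ L, a + d ∈ L ∧ ∀ b ∈ L, a < b → a + d ≤ b}

/-- The set of distances `Δ(H) = ⋃_{a ∈ H} Δ(L(a))`. -/
def DeltaM (H : AddSubmonoid (Multiset G)) : Set ℕ :=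
  {d | ∃ a ∈ H, d ∈ DistSet (LengthSet H a)}

/-- `a` divides `b` in `H`. -/
def DvdIn (H : AddSubmonoid (Multiset G)) (a b : Multiset G) : Prop :=
  ∃ c ∈ H, b = a + c

/-- `S` is a divisor-closed submonoid of `H`. -/
def IsDivClosed (H S : AddSubmonoid (Multiset G)) : Prop :=
  S ≤ H ∧ ∀ s ∈ S, ∀ a ∈ H, DvdIn H a s → a ∈ S

/-- The set of minimal distances
`Δ*(H) = {min Δ(S) : S a divisor-closed submonoid of H with Δ(S) ≠ ∅}`. -/
def DeltaStar (H : AddSubmonoid (Multiset G)) : Set ℕ :=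
  {d | ∃ S : AddSubmonoid (Multiset G), IsDivClosed H S ∧ (DeltaM S).Nonempty ∧ d = sInf (DeltaM S)}

/-- The set of lengths of atoms of `H`. -/
def AtomLengths (H : AddSubmonoid (Multiset G)) : Set ℕ :=
  {n | ∃ A : Multiset G, IsPMAtom H A ∧ Multiset.card A = n}

/-- The Davenport constant `D(H)` of `H`: the supremum of the lengths of the atoms of `H`.  -/
noncomputable def DavD (H : AddSubmonoid (Multiset G)) : ℕ :=
  sSup (AtomLengths H)

/-- The system of sets of lengths `L(H)` of `H`. -/
def LSys (H : AddSubmonoid (Multiset G)) : Set (Set ℕ) :=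
  {L | ∃ a ∈ H, L = LengthSet H a}

/-- `d` is the greatest common divisor of the set `S` of integers. -/
def IsSetGCD (S : Set ℤ) (d : ℕ) : Prop :=
  (∀ x ∈ S, (d : ℤ) ∣ x) ∧ ∀ c : ℕ, (∀ x ∈ S, (c : ℤ) ∣ x) → c ∣ d

/-- A family `e` of elements of an abelian group is independent if `∑ c i • e i = 0`
with integer coefficients implies `c i • e i = 0` for each `i`. -/
def IsIndepFamily {k : ℕ} (e : Fin k → G) : Prop :=
  ∀ c : Fin k → ℤ, ∑ i, c i • e i = 0 → ∀ i, c i • e i = 0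

/-- The (classical) Davenport constant of the abelian group `G`: the smallest `ℓ` such that
every sequence over `G` of length at least `ℓ` has a nonempty zero-sum subsequence. -/
noncomputable def DavenportGroup (G : Type*) [AddCommGroup G] : ℕ :=
  sInf {ℓ | ∀ S : Multiset G, ℓ ≤ Multiset.card S → ∃ T, T ≤ S ∧ T ≠ 0 ∧ T.sum = 0}

/-! Write `e^x (ae)^y` for a sequence over `G₀ = {e, a e}`. As `a² ≡ -1 mod n`, swapping `x` and
`y` preserves `B±(G₀)`. An atom other than `e²` and `(ae)²` carries a single sign on each of its
two elements, so `x ± y a ≡ 0 mod n`, and after a swap `n ∣ x + y a`. Splitting off `e (ae)^a`,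
`e^n` or `(ae)^n` shows that then `x + y a = n` or the atom is `(ae)^n`; as `a ≡ 1 mod a - 1`,
every atom has length `≡ 2 mod a - 1`. Since `a` is even, `a - 1` is odd, so all factorization
lengths of a sequence are congruent mod `a - 1`, while `e² (ae)^{2a}` has the lengths `2` and
`a + 1`. -/

def IsAtomIn {M : Type*} [AddCommMonoid M] (H : AddSubmonoid M) (v : M) : Prop :=
  v ∈ H ∧ v ≠ 0 ∧ ∀ u w : M, u ∈ H → w ∈ H → v = u + w → u = 0 ∨ w = 0

lemma isAtomIn_map_iff {M N : Type*} [AddCommMonoid M] [AddCommMonoid N] {f : M →+ N}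
    (hf : Function.Injective f) {H : AddSubmonoid M} {v : M} :
    IsAtomIn (H.map f) (f v) ↔ IsAtomIn H v := by
  have hf0 : ∀ {u}, f u = 0 ↔ u = 0 := fun {u} => by rw [← _root_.map_zero f, hf.eq_iff]
  constructor
  · rintro ⟨hmem, hne, hsplit⟩
    obtain ⟨w, hw, hwv⟩ := hmem
    refine ⟨hf hwv ▸ hw, fun h => hne (hf0.2 h), fun u w hu hw huw => ?_⟩
    simpa only [hf0] using hsplit (f u) (f w) (H.mem_map_of_mem f hu) (H.mem_map_of_mem f hw)
      (by rw [huw, _root_.map_add])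
  · rintro ⟨hmem, hne, hsplit⟩
    refine ⟨H.mem_map_of_mem f hmem, fun h => hne (hf0.1 h), ?_⟩
    rintro _ _ ⟨u, hu, rfl⟩ ⟨w, hw, rfl⟩ huw
    simpa only [hf0] using hsplit u w hu hw (hf (by rw [huw, _root_.map_add]))

section Lengths

variable {α : Type*} {H : AddSubmonoid (Multiset α)}

lemma card_modEq_mul_of_mem_lengthSet {m c : ℕ}
    (hatom : ∀ A, IsPMAtom H A → card A ≡ c [MOD m]) {S : Multiset α} {k : ℕ}
    (hk : k ∈ LengthSet H S) : card S ≡ c * k [MOD m] := by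
  obtain ⟨l, hl, rfl, rfl⟩ := hk
  induction l with
  | nil => rfl
  | cons A l ih =>
    simp only [List.mem_cons, forall_eq_or_imp] at hl
    rw [List.sum_cons, Multiset.card_add, List.length_cons, mul_add_one, add_comm]
    exact (ih hl.2).add (hatom A hl.1)

lemma mem_of_mem_lengthSet {S : Multiset α} {k : ℕ} (hk : k ∈ LengthSet H S) : S ∈ H := by
  obtain ⟨l, hl, rfl, -⟩ := hk
  exact list_sum_mem fun A hA => (hl A hA).1

lemma dvd_of_mem_deltaM {m : ℕ}
    (hL : ∀ S k k', k ∈ LengthSet H S → k' ∈ LengthSet H S → k ≡ k' [MOD m]) {d : ℕ}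
    (hd : d ∈ DeltaM H) : m ∣ d := by
  obtain ⟨S, -, -, k, hk, hkd, -⟩ := hd
  exact (Nat.modEq_iff_dvd' (Nat.le_add_right k d)).1 (hL S _ _ hk hkd) |>.trans (by simp)

lemma mem_deltaM_of_modEq {m : ℕ} (hm : 0 < m)
    (hL : ∀ S k k', k ∈ LengthSet H S → k' ∈ LengthSet H S → k ≡ k' [MOD m])
    {S : Multiset α} {k : ℕ} (hk : k ∈ LengthSet H S)
    (hkm : k + m ∈ LengthSet H S) : m ∈ DeltaM H := by
  refine ⟨S, mem_of_mem_lengthSet hk, hm, k, hk, hkm, fun b hb hkb => ?_⟩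
  have := Nat.le_of_dvd (by omega) ((Nat.modEq_iff_dvd' hkb.le).1 (hL S _ _ hk hb))
  omega

lemma sInf_deltaM_eq_of_modEq {m : ℕ} (hm : m ∈ DeltaM H)
    (hL : ∀ S k k', k ∈ LengthSet H S → k' ∈ LengthSet H S → k ≡ k' [MOD m]) :
    sInf (DeltaM H) = m :=
  le_antisymm (Nat.sInf_le hm) <| le_csInf ⟨m, hm⟩ fun d hd => by
    obtain ⟨-, -, hd0, -⟩ := id hd
    exact Nat.le_of_dvd hd0 (dvd_of_mem_deltaM hL hd)

end Lengths

lemma isDivClosed_PMZS_of_subset {G₀ G₁ : Set G} (h : G₀ ⊆ G₁) :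
    IsDivClosed (PMZS G₁) (PMZS G₀) := by
  refine ⟨fun S hS => ⟨fun g hg => h (hS.1 g hg), hS.2⟩, ?_⟩
  rintro S hS A hA ⟨C, -, rfl⟩
  exact ⟨fun g hg => hS.1 g (mem_add.2 (Or.inl hg)), hA.2⟩

-- `(x, y)` stands for `e^x (a e)^y`; a signing is a splitting `v₁ + v₂` into the elements taken
-- with `+` and with `-`, whose values `x + y a` must then agree modulo `n = ord e`.
def pmPairs (n a : ℕ) : AddSubmonoid (ℕ × ℕ) where
  carrier := {v | ∃ v₁ v₂ : ℕ × ℕ, v₁ + v₂ = v ∧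
    (v₁.1 + v₁.2 * a : ZMod n) = v₂.1 + v₂.2 * a}
  zero_mem' := ⟨0, 0, by simp⟩
  add_mem' := by
    rintro _ _ ⟨u₁, u₂, rfl, hu⟩ ⟨w₁, w₂, rfl, hw⟩
    refine ⟨u₁ + w₁, u₂ + w₂, add_add_add_comm _ _ _ _, ?_⟩
    push_cast [Prod.fst_add, Prod.snd_add]
    linear_combination hu + hw

section PMPairs

variable {n a : ℕ}

lemma mk_mem_pmPairs_of_eq_zero {x y : ℕ} (h : (x + y * a : ZMod n) = 0) : (x, y) ∈ pmPairs n a :=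
  ⟨(x, y), 0, add_zero _, by simpa using h⟩

lemma cast_sq_add_one_eq_zero (hn : n = a ^ 2 + 1) : (a : ZMod n) ^ 2 + 1 = 0 := by
  rw [← ZMod.natCast_self n, hn]; push_cast; ring

lemma swap_mem_pmPairs (hn : n = a ^ 2 + 1) {v : ℕ × ℕ} (hv : v ∈ pmPairs n a) :
    v.swap ∈ pmPairs n a := by
  obtain ⟨⟨x₁, y₁⟩, ⟨x₂, y₂⟩, rfl, h⟩ := hv
  refine ⟨(y₂, x₁), (y₁, x₂), by simp [add_comm], ?_⟩
  linear_combination (a : ZMod n) * h + (y₂ - y₁ : ZMod n) * cast_sq_add_one_eq_zero hn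

lemma isAtomIn_swap (hn : n = a ^ 2 + 1) {v : ℕ × ℕ} (hv : IsAtomIn (pmPairs n a) v) :
    IsAtomIn (pmPairs n a) v.swap := by
  have hswap0 : ∀ p : ℕ × ℕ, p.swap = 0 ↔ p = 0 := fun _ => Prod.swap_inj (q := 0)
  obtain ⟨hmem, hne, hsplit⟩ := hv
  refine ⟨swap_mem_pmPairs hn hmem, (hswap0 v).not.2 hne, fun u w hu hw huw => ?_⟩
  simpa only [hswap0] using hsplit u.swap w.swap (swap_mem_pmPairs hn hu) (swap_mem_pmPairs hn hw)
    (by rw [← Prod.swap_swap v, huw, Prod.swap_add])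

lemma mk_one_notMem_pmPairs (hn : n = a ^ 2 + 1) (ha : 2 ≤ a) {y : ℕ} (hy : y < a) :
    (1, y) ∉ pmPairs n a := by
  rintro ⟨⟨x₁, y₁⟩, ⟨x₂, y₂⟩, hsum, h⟩
  simp only [Prod.mk_add_mk, Prod.mk.injEq] at hsum
  set t : ℤ := x₁ - x₂ + (y₁ - y₂) * a
  have hdvd : (n : ℤ) ∣ t := (ZMod.intCast_zmod_eq_zero_iff_dvd t n).1 <| by
    push_cast [t]; linear_combination h
  have hy₁ : (y₁ : ℤ) * a ≤ (a - 1) * a := by gcongr; omega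
  have hy₂ : (y₂ : ℤ) * a ≤ (a - 1) * a := by gcongr; omega
  have ht : |t| < n := abs_lt.2 ⟨by push_cast [hn, t]; nlinarith, by push_cast [hn, t]; nlinarith⟩
  have ht0 := Int.eq_zero_of_abs_lt_dvd hdvd ht
  -- `t = ±1 + s * a` cannot vanish when `a ≥ 2`
  rcases lt_trichotomy (y₁ : ℤ) y₂ with hlt | heq | hgt
  · nlinarith
  · simp only [t, heq, sub_self, zero_mul, add_zero] at ht0; omega
  · nlinarith

lemma isAtomIn_two_zero (hn : n = a ^ 2 + 1) (ha : 2 ≤ a) : IsAtomIn (pmPairs n a) (2, 0) := by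
  refine ⟨⟨(1, 0), (1, 0), rfl, rfl⟩, by simp, ?_⟩
  rintro ⟨x₁, y₁⟩ ⟨x₂, y₂⟩ hu - h
  simp only [Prod.mk_add_mk, Prod.mk.injEq] at h
  have : (x₁, y₁) ≠ (1, 0) := fun h' => mk_one_notMem_pmPairs hn ha (by omega) (h' ▸ hu)
  simp only [ne_eq, Prod.mk.injEq, Prod.mk_eq_zero] at this ⊢
  omega

lemma isAtomIn_one_a (hn : n = a ^ 2 + 1) (ha : 2 ≤ a) : IsAtomIn (pmPairs n a) (1, a) := by
  have hmem : (1, a) ∈ pmPairs n a :=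
    mk_mem_pmPairs_of_eq_zero (by push_cast; linear_combination cast_sq_add_one_eq_zero hn)
  have key : ∀ u w : ℕ × ℕ, u ∈ pmPairs n a → (1, a) = u + w → u.1 = 1 → w = 0 := by
    rintro ⟨x₁, y₁⟩ ⟨x₂, y₂⟩ hu h (rfl : x₁ = 1)
    simp only [Prod.mk_add_mk, Prod.mk.injEq] at h
    by_contra hw
    simp only [Prod.mk_eq_zero] at hw
    exact mk_one_notMem_pmPairs hn ha (by omega) hu
  refine ⟨hmem, by simp, fun u w hu hw h => ?_⟩
  have h1 : u.1 + w.1 = 1 := by simpa using congrArg Prod.fst h.symm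
  rcases Nat.eq_zero_or_pos u.1 with hu1 | hu1
  · exact .inl (key w u hw (h.trans (add_comm u w)) (by omega))
  · exact .inr (key u w hu h (by omega))

lemma eq_zero_or_eq_of_isAtomIn {x y : ℕ} (hv : IsAtomIn (pmPairs n a) (x, y))
    (h20 : (x, y) ≠ (2, 0)) (h02 : (x, y) ≠ (0, 2)) :
    (x + y * a : ZMod n) = 0 ∨ (x : ZMod n) = y * a := by
  obtain ⟨⟨⟨x₁, y₁⟩, ⟨x₂, y₂⟩, hsum, h⟩, -, hsplit⟩ := hv
  simp only [Prod.mk_add_mk, Prod.mk.injEq] at hsum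
  obtain ⟨rfl, rfl⟩ := hsum
  -- two copies of one element taken with opposite signs split off `(2, 0)` or `(0, 2)`
  have hx : x₁ = 0 ∨ x₂ = 0 := by
    by_contra! hx
    obtain ⟨⟨x₁, rfl⟩, ⟨x₂, rfl⟩⟩ := And.intro (Nat.exists_eq_succ_of_ne_zero hx.1)
      (Nat.exists_eq_succ_of_ne_zero hx.2)
    have hrest : (x₁ + x₂, y₁ + y₂) ∈ pmPairs n a :=
      ⟨(x₁, y₁), (x₂, y₂), rfl, by push_cast at h; linear_combination h⟩
    rcases hsplit (2, 0) _ ⟨(1, 0), (1, 0), rfl, rfl⟩ hrest (by simp; omega) with h' | h'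
    · simp at h'
    · exact h20 (by simp only [Prod.mk_eq_zero] at h'; simp; omega)
  have hy : y₁ = 0 ∨ y₂ = 0 := by
    by_contra! hy
    obtain ⟨⟨y₁, rfl⟩, ⟨y₂, rfl⟩⟩ := And.intro (Nat.exists_eq_succ_of_ne_zero hy.1)
      (Nat.exists_eq_succ_of_ne_zero hy.2)
    have hrest : (x₁ + x₂, y₁ + y₂) ∈ pmPairs n a :=
      ⟨(x₁, y₁), (x₂, y₂), rfl, by push_cast at h; linear_combination h⟩
    rcases hsplit (0, 2) _ ⟨(0, 1), (0, 1), rfl, rfl⟩ hrest (by simp; omega) with h' | h'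
    · simp at h'
    · exact h02 (by simp only [Prod.mk_eq_zero] at h'; simp; omega)
  push_cast
  rcases hx with rfl | rfl <;> rcases hy with rfl | rfl <;> push_cast at h
  · exact .inl (by linear_combination -h)
  · exact .inr (by linear_combination -h)
  · exact .inr (by linear_combination h)
  · exact .inl (by linear_combination h)

lemma add_mul_eq_or_eq_of_isAtomIn (hn : n = a ^ 2 + 1) (ha : 1 ≤ a) {x y : ℕ}
    (hv : IsAtomIn (pmPairs n a) (x, y)) (hw : (x + y * a : ZMod n) = 0) :
    x + y * a = n ∨ (x = 0 ∧ y = n) := by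
  obtain ⟨-, hne, hsplit⟩ := hv
  simp only [ne_eq, Prod.mk_eq_zero, not_and_or] at hne
  have hsq := cast_sq_add_one_eq_zero hn
  have hsplit' : ∀ x₁ y₁ x₂ y₂ : ℕ, x = x₁ + x₂ → y = y₁ + y₂ → (x₁ + y₁ * a : ZMod n) = 0 →
      (x₁ ≠ 0 ∨ y₁ ≠ 0) → (x₂ ≠ 0 ∨ y₂ ≠ 0) → False := by
    rintro x₁ y₁ x₂ y₂ rfl rfl h₁ hu hw'
    have h₂ : (x₂ + y₂ * a : ZMod n) = 0 := by push_cast at hw; linear_combination hw - h₁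
    rcases hsplit (x₁, y₁) (x₂, y₂) (mk_mem_pmPairs_of_eq_zero h₁)
      (mk_mem_pmPairs_of_eq_zero h₂) rfl with h | h <;> simp only [Prod.mk_eq_zero] at h <;> omega
  obtain ⟨k, hk⟩ := (ZMod.natCast_eq_zero_iff (x + y * a) n).1 (by push_cast; exact hw)
  rcases k with _ | _ | k
  · simp only [mul_zero, Nat.add_eq_zero_iff, Nat.mul_eq_zero] at hk
    omega
  · exact .inl (by rw [hk, zero_add, mul_one])
  have h2n : 2 * n ≤ x + y * a := by rw [hk]; nlinarith
  rcases Nat.lt_or_ge y a with hya | hya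
  · have : y * a ≤ (a - 1) * a := Nat.mul_le_mul_right a (by omega)
    have : (a - 1) * a < n := by rw [hn]; cases a <;> simp; nlinarith
    exact (hsplit' n 0 (x - n) y (by omega) (by omega) (by simp) (by omega) (by omega)).elim
  rcases Nat.eq_zero_or_pos x with rfl | hx
  · have hy : (y : ZMod n) = 0 := by
      linear_combination (1 : ZMod n) * (y : ZMod n) * hsq - (a : ZMod n) * hw
    obtain ⟨m, rfl⟩ := (ZMod.natCast_eq_zero_iff _ _).1 hy
    rcases m with _ | _ | m
    · simp at hne
    · exact .inr ⟨rfl, mul_one n⟩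
    · exact (hsplit' 0 n 0 (n * (m + 1)) rfl (by ring) (by simp) (by omega)
        (.inr (Nat.mul_ne_zero (by omega) (by omega)))).elim
  · refine (hsplit' 1 a (x - 1) (y - a) (by omega) (by omega)
      (by push_cast; linear_combination hsq) (by omega) ?_).elim
    by_contra! h
    obtain ⟨rfl, rfl⟩ : x = 1 ∧ y = a := by omega
    rw [hn] at h2n
    nlinarith

lemma card_modEq_two_of_isAtomIn_of_eq_zero (hn : n = a ^ 2 + 1) (ha : 1 ≤ a) {x y : ℕ}
    (hv : IsAtomIn (pmPairs n a) (x, y)) (hw : (x + y * a : ZMod n) = 0) :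
    x + y ≡ 2 [MOD a - 1] := by
  have ha1 : a ≡ 1 [MOD a - 1] := Nat.modEq_sub ha
  have hn2 : n ≡ 2 [MOD a - 1] := hn ▸ (ha1.pow 2).add_right 1
  rcases add_mul_eq_or_eq_of_isAtomIn hn ha hv hw with h | ⟨rfl, rfl⟩
  · have hcard : x + y * a ≡ x + y [MOD a - 1] := by simpa using (ha1.mul_left y).add_left x
    exact hcard.symm.trans (h ▸ hn2)
  · simpa using hn2

end PMPairs

lemma card_modEq_two_of_isAtomIn {n a : ℕ} (hn : n = a ^ 2 + 1) (ha : 1 ≤ a) {v : ℕ × ℕ}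
    (hv : IsAtomIn (pmPairs n a) v) : v.1 + v.2 ≡ 2 [MOD a - 1] := by
  obtain ⟨x, y⟩ := v
  by_cases h20 : (x, y) = (2, 0)
  · obtain ⟨rfl, rfl⟩ := Prod.mk.inj h20; rfl
  by_cases h02 : (x, y) = (0, 2)
  · obtain ⟨rfl, rfl⟩ := Prod.mk.inj h02; rfl
  rcases eq_zero_or_eq_of_isAtomIn hv h20 h02 with h | h
  · exact card_modEq_two_of_isAtomIn_of_eq_zero hn ha hv h
  · rw [add_comm]
    refine card_modEq_two_of_isAtomIn_of_eq_zero hn ha (isAtomIn_swap hn hv) ?_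
    linear_combination (a : ZMod n) * h + (y : ZMod n) * cast_sq_add_one_eq_zero hn

section PairSeq

variable {α : Type*}

def pairSeq (g h : α) : ℕ × ℕ →+ Multiset α :=
  (replicateAddMonoidHom g).coprod (replicateAddMonoidHom h)

lemma pairSeq_apply (g h : α) (v : ℕ × ℕ) : pairSeq g h v = replicate v.1 g + replicate v.2 h :=
  rfl

lemma card_pairSeq (g h : α) (v : ℕ × ℕ) : card (pairSeq g h v) = v.1 + v.2 := by
  simp [pairSeq_apply]

variable [DecidableEq α] {g h : α}

lemma count_pairSeq_left (hgh : g ≠ h) (v : ℕ × ℕ) : count g (pairSeq g h v) = v.1 := by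
  simp [pairSeq_apply, count_replicate, hgh.symm]

lemma count_pairSeq_right (hgh : g ≠ h) (v : ℕ × ℕ) : count h (pairSeq g h v) = v.2 := by
  simp [pairSeq_apply, count_replicate, hgh]

lemma pairSeq_count (hgh : g ≠ h) {S : Multiset α} (hS : ∀ x ∈ S, x ∈ ({g, h} : Set α)) :
    pairSeq g h (count g S, count h S) = S := by
  ext x
  by_cases hxg : x = g
  · subst hxg; exact count_pairSeq_left hgh _
  by_cases hxh : x = h
  · subst hxh; exact count_pairSeq_right hgh _
  have hxS : x ∉ S := fun hx => by simpa [hxg, hxh] using hS x hx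
  simp [pairSeq_apply, count_replicate, count_eq_zero.2 hxS, Ne.symm hxg, Ne.symm hxh]

end PairSeq

lemma pairSeq_injective {α : Type*} {g h : α} (hgh : g ≠ h) :
    Function.Injective (pairSeq g h) := by
  classical
  intro v w hvw
  exact Prod.ext (by simpa [count_pairSeq_left hgh] using congrArg (count g) hvw)
    (by simpa [count_pairSeq_right hgh] using congrArg (count h) hvw)

section Bridge

variable {n a : ℕ} {e : G}

lemma sum_pairSeq_eq_iff (he : addOrderOf e = n) (v w : ℕ × ℕ) :
    (pairSeq e (a • e) v).sum = (pairSeq e (a • e) w).sum ↔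
      (v.1 + v.2 * a : ZMod n) = w.1 + w.2 * a := by
  have hsum : ∀ u : ℕ × ℕ, (pairSeq e (a • e) u).sum = (u.1 + u.2 * a) • e := fun u => by
    simp [pairSeq_apply, add_smul, mul_smul]
  rw [hsum, hsum, nsmul_eq_nsmul_iff_modEq, he, ← ZMod.natCast_eq_natCast_iff]
  push_cast; rfl

lemma PMZS_pair_eq_map (he : addOrderOf e = n) (hne : e ≠ a • e) :
    PMZS ({e, a • e} : Set G) = (pmPairs n a).map (pairSeq e (a • e)) := by
  classical
  have hcount := fun {S : Multiset G} (hS : ∀ x ∈ S, x ∈ ({e, a • e} : Set G)) =>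
    pairSeq_count hne hS
  ext S
  constructor
  · rintro ⟨hS, S₁, S₂, rfl, hsum⟩
    have hS₁ : ∀ x ∈ S₁, x ∈ ({e, a • e} : Set G) := fun x hx => hS x (mem_add.2 (.inl hx))
    have hS₂ : ∀ x ∈ S₂, x ∈ ({e, a • e} : Set G) := fun x hx => hS x (mem_add.2 (.inr hx))
    rw [← hcount hS₁, ← hcount hS₂, sum_pairSeq_eq_iff he] at hsum
    refine ⟨_, ⟨_, _, rfl, hsum⟩, ?_⟩
    rw [_root_.map_add, hcount hS₁, hcount hS₂]
  · rintro ⟨_, ⟨v₁, v₂, rfl, hw⟩, rfl⟩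
    refine ⟨fun x hx => ?_, pairSeq e (a • e) v₁, pairSeq e (a • e) v₂, _root_.map_add _ _ _,
      (sum_pairSeq_eq_iff he v₁ v₂).2 hw⟩
    simp only [pairSeq_apply, mem_add, mem_replicate] at hx
    rcases hx with ⟨-, rfl⟩ | ⟨-, rfl⟩ <;> simp

lemma isPMAtom_pairSeq_iff (he : addOrderOf e = n) (hne : e ≠ a • e) {v : ℕ × ℕ} :
    IsPMAtom (PMZS ({e, a • e} : Set G)) (pairSeq e (a • e) v) ↔ IsAtomIn (pmPairs n a) v := by
  rw [PMZS_pair_eq_map he hne]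
  exact isAtomIn_map_iff (pairSeq_injective hne)

end Bridge

section Application

variable {n a : ℕ} {e : G}

lemma self_ne_nsmul_of_sq_add_one (he : addOrderOf e = n) (hn : n = a ^ 2 + 1) (ha : 2 ≤ a) :
    e ≠ a • e := by
  intro h
  have h1a : 1 ≡ a [MOD n] := by rwa [← he, ← nsmul_eq_nsmul_iff_modEq, one_nsmul]
  rw [Nat.ModEq, Nat.mod_eq_of_lt (by nlinarith), Nat.mod_eq_of_lt (by nlinarith)] at h1a
  omega

lemma card_modEq_two_of_isPMAtom (he : addOrderOf e = n) (hn : n = a ^ 2 + 1) (ha : 2 ≤ a)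
    {A : Multiset G} (hA : IsPMAtom (PMZS ({e, a • e} : Set G)) A) :
    card A ≡ 2 [MOD a - 1] := by
  have hne := self_ne_nsmul_of_sq_add_one he hn ha
  obtain ⟨v, -, rfl⟩ : A ∈ (pmPairs n a).map (pairSeq e (a • e)) :=
    PMZS_pair_eq_map he hne ▸ hA.1
  rw [card_pairSeq]
  exact card_modEq_two_of_isAtomIn hn (by omega) ((isPMAtom_pairSeq_iff he hne).1 hA)

lemma modEq_of_mem_lengthSet (he : addOrderOf e = n) (hn : n = a ^ 2 + 1) (ha : 2 ≤ a)
    (hodd : Odd (a - 1)) (S : Multiset G) (k k' : ℕ)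
    (hk : k ∈ LengthSet (PMZS ({e, a • e} : Set G)) S)
    (hk' : k' ∈ LengthSet (PMZS ({e, a • e} : Set G)) S) : k ≡ k' [MOD a - 1] := by
  have hcard : ∀ {k}, k ∈ LengthSet (PMZS ({e, a • e} : Set G)) S → card S ≡ 2 * k [MOD a - 1] :=
    card_modEq_mul_of_mem_lengthSet fun _ hA => card_modEq_two_of_isPMAtom he hn ha hA
  exact (hcard hk).symm.trans (hcard hk') |>.cancel_left_of_coprime hodd.coprime_two_right

lemma sub_one_mem_deltaM (he : addOrderOf e = n) (hn : n = a ^ 2 + 1) (ha : 2 ≤ a)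
    (hodd : Odd (a - 1)) : a - 1 ∈ DeltaM (PMZS ({e, a • e} : Set G)) := by
  have hne := self_ne_nsmul_of_sq_add_one he hn ha
  have hatom := fun {v} (hv : IsAtomIn (pmPairs n a) v) => (isPMAtom_pairSeq_iff he hne).2 hv
  have h1a := hatom (isAtomIn_one_a hn ha)
  have h20 := hatom (isAtomIn_two_zero hn ha)
  have h02 := hatom (isAtomIn_swap hn (isAtomIn_two_zero hn ha))
  -- `e² (ae)^{2a} = (e (ae)^a)² = e² · ((ae)²)^a`
  have hlen2 : 2 ∈ LengthSet (PMZS ({e, a • e} : Set G)) (pairSeq e (a • e) (2, 2 * a)) := by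
    refine ⟨[pairSeq e (a • e) (1, a), pairSeq e (a • e) (1, a)], by simpa using h1a, ?_, rfl⟩
    simp only [List.sum_cons, List.sum_nil, add_zero, ← _root_.map_add]
    congr 1; ext <;> simp; ring
  have hlen : a + 1 ∈ LengthSet (PMZS ({e, a • e} : Set G)) (pairSeq e (a • e) (2, 2 * a)) := by
    refine ⟨pairSeq e (a • e) (2, 0) :: List.replicate a (pairSeq e (a • e) (0, 2)), ?_, ?_,
      by simp⟩
    · simp only [List.mem_cons, List.mem_replicate]
      rintro A (rfl | ⟨-, rfl⟩) <;> assumption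
    · simp only [List.sum_cons, List.sum_replicate, ← _root_.map_nsmul, ← _root_.map_add]
      congr 1; ext <;> simp; ring
  exact mem_deltaM_of_modEq (by omega) (modEq_of_mem_lengthSet he hn ha hodd) hlen2
    (by rwa [show 2 + (a - 1) = a + 1 by omega])

end Application

/-- Let `n` be odd with `n = a² + 1`. Then `a - 1 ∈ Δ*(B±(C_n))`; more precisely, for any
generator `e` of `C_n` and `G₀ = {e, a·e}`, one has `min Δ(B±(G₀)) = a - 1`. -/
theorem stmt_9 (n a : ℕ) (ha : 0 < a) (hodd : Odd n) (hn : n = a ^ 2 + 1) :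
    a - 1 ∈ DeltaStar (PMZS (Set.univ : Set (ZMod n))) ∧
    ∀ e : ZMod n, addOrderOf e = n →
      sInf (DeltaM (PMZS ({e, a • e} : Set (ZMod n)))) = a - 1 := by
  have heven : Even a := by simpa [hn, parity_simps] using hodd
  have ha2 : 2 ≤ a := by obtain ⟨b, rfl⟩ := heven; omega
  have hodd' : Odd (a - 1) := Nat.Even.sub_odd ha heven odd_one
  have hsInf : ∀ e : ZMod n, addOrderOf e = n →
      sInf (DeltaM (PMZS ({e, a • e} : Set (ZMod n)))) = a - 1 := fun e he =>
    sInf_deltaM_eq_of_modEq (sub_one_mem_deltaM he hn ha2 hodd')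
      (modEq_of_mem_lengthSet he hn ha2 hodd')
  refine ⟨⟨_, isDivClosed_PMZS_of_subset (Set.subset_univ _),
    ⟨_, sub_one_mem_deltaM (ZMod.addOrderOf_one n) hn ha2 hodd'⟩,
    (hsInf 1 (ZMod.addOrderOf_one n)).symm⟩, hsInf⟩
end

section
/- Let G be a finite abelian group and let e₁, …, e_r be independent elements of even order, say ord(e_i) = 2m_i, with m₁ + … + m_r ≥ 2. Let e₀ = m₁e₁ + … + m_r e_r, set G₀ = {e₀, e₁, …, e_r} and H = B±(G₀). Then Δ(H) = {m₁ + … + m_r − 1}. -/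
open Multiset

variable {G : Type*} [AddCommGroup G]

/-
A sequence over `G₀` is determined by the multiplicities `a` of `e₀` and `bᵢ` of `eᵢ`.
By independence, it is a plus-minus weighted zero-sum sequence iff every `bᵢ` has the form
`2cᵢ + (a mod 2)·mᵢ`. Hence the atoms are the squares `e₀²`, `eᵢ²` and `W = e₀e₁^{m₁}⋯e_r^{m_r}`,
and a factorization of `S` of length `k` containing `w` copies of `W` satisfies
`|S| = 2k + w(M - 1)` (where `M = m₁ + ⋯ + m_r`) and `w ≡ a mod 2`. So two factorizations of
different lengths differ in `w` by at least `2`, and their lengths by at least `M - 1`; conversely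
`W² = e₀² ∏ (eᵢ²)^{mᵢ}` trades two copies of `W` for `M + 1` atoms, so a length with `w ≥ 2` is
followed by one exactly `M - 1` larger. `W²` itself has lengths `2` and `M + 1` only.
-/

theorem Nat.eq_of_modEq_two_mul_self {m δ : ℕ} (hδ : δ ≤ 1) (h : m ≡ δ [MOD 2 * m]) : m = δ := by
  rcases Nat.eq_zero_or_pos m with rfl | hm
  · simpa [Nat.ModEq] using h
  · exact h.eq_of_lt_of_lt (by omega) (by omega)

theorem Nat.exists_eq_two_mul_add_of_modEq {m a₁ a₂ b₁ b₂ : ℕ}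
    (h : a₁ * m + b₁ ≡ a₂ * m + b₂ [MOD 2 * m]) :
    ∃ c, b₁ + b₂ = 2 * c + (a₁ + a₂) % 2 * m := by
  obtain ⟨k, hk⟩ := Nat.modEq_iff_dvd.mp h
  set t := (a₁ + a₂) % 2 with ht
  obtain ⟨j, hj⟩ : ∃ j : ℤ, 2 * k + a₁ - a₂ = 2 * j + t := ⟨(2 * k + a₁ - a₂ - t) / 2, by omega⟩
  push_cast at hk
  have hb : (b₂ : ℤ) - b₁ = 2 * (m * j) + t * m := by linear_combination hk + (m : ℤ) * hj
  -- for `t = 1`, `b₂ - b₁` is an odd multiple of `m`, so `b₁ + b₂ ≥ |b₂ - b₁| ≥ m`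
  have hmj : 0 ≤ (m : ℤ) * j ∨ (m : ℤ) * j ≤ -m := by
    rcases le_or_gt 0 j with hj0 | hj0
    · exact Or.inl (by positivity)
    · exact Or.inr (by nlinarith)
  refine ⟨(b₁ + b₂ - t * m) / 2, ?_⟩
  rcases (by omega : t = 0 ∨ t = 1) with h | h <;>
    simp only [h, Nat.cast_zero, Nat.cast_one, zero_mul, one_mul, add_zero] at hb ⊢ <;> omega

theorem Nat.two_le_and_le_of_two_mul_add_mul_eq {k d w w' n : ℕ}
    (h : 2 * k + w * n = 2 * (k + d) + w' * n) (hw : w % 2 = w' % 2) (hd : 0 < d) :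
    2 ≤ w ∧ n ≤ d := by
  have hlt : w' < w := by
    by_contra! hle
    nlinarith [Nat.mul_le_mul_right n hle]
  obtain ⟨δ, rfl⟩ : ∃ δ, w = w' + 2 + δ := ⟨w - w' - 2, by omega⟩
  constructor
  · omega
  · nlinarith

namespace IsIndepFamily

variable {G : Type*} [AddCommGroup G] {k : ℕ} {e : Fin k → G}

theorem nsmul_eq_nsmul (he : IsIndepFamily e) {x y : Fin k → ℕ}
    (h : ∑ i, x i • e i = ∑ i, y i • e i) (i : Fin k) : x i • e i = y i • e i := by
  have := he (fun i => (x i : ℤ) - y i) (by simp [sub_smul, Finset.sum_sub_distrib, h]) i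
  rwa [sub_smul, sub_eq_zero, natCast_zsmul, natCast_zsmul] at this

theorem injective (he : IsIndepFamily e) (h0 : ∀ i, e i ≠ 0) : Function.Injective e := by
  intro i j hij
  by_contra hne
  exact h0 i (by simpa [hne] using
    he.nsmul_eq_nsmul (x := Pi.single i 1) (y := Pi.single j 1) (by simp [hij]) i)

end IsIndepFamily

theorem Multiset.eq_of_count_eq_on {α : Type*} [DecidableEq α] {s : Set α} {S T : Multiset α}
    (hS : ∀ g ∈ S, g ∈ s) (hT : ∀ g ∈ T, g ∈ s) (h : ∀ g ∈ s, count g S = count g T) :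
    S = T := by
  ext g
  by_cases hg : g ∈ s
  · exact h g hg
  · rw [count_eq_zero.2 (mt (hS g) hg), count_eq_zero.2 (mt (hT g) hg)]

section LengthSet

variable {G : Type*} {H : AddSubmonoid (Multiset G)}

theorem length_mem_lengthSet_sum {l : List (Multiset G)} (hl : ∀ A ∈ l, IsPMAtom H A) :
    l.length ∈ LengthSet H l.sum :=
  ⟨l, hl, rfl, rfl⟩

theorem IsPMAtom.one_mem_lengthSet {A : Multiset G} (hA : IsPMAtom H A) : 1 ∈ LengthSet H A :=
  ⟨[A], by simpa using hA, by simp, rfl⟩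

theorem zero_mem_lengthSet_zero : 0 ∈ LengthSet H 0 :=
  ⟨[], by simp, rfl, rfl⟩

theorem add_mem_lengthSet_add {x y : Multiset G} {k k' : ℕ} (hx : k ∈ LengthSet H x)
    (hy : k' ∈ LengthSet H y) : k + k' ∈ LengthSet H (x + y) := by
  obtain ⟨l, hl, rfl, rfl⟩ := hx
  obtain ⟨l', hl', rfl, rfl⟩ := hy
  exact ⟨l ++ l', fun A hA => (List.mem_append.1 hA).elim (hl A) (hl' A), by simp, by simp⟩

theorem nsmul_mem_lengthSet_nsmul {x : Multiset G} {k : ℕ} (n : ℕ) (hx : k ∈ LengthSet H x) :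
    n * k ∈ LengthSet H (n • x) := by
  induction n with
  | zero => simpa using zero_mem_lengthSet_zero
  | succ n ih => simpa [add_mul, succ_nsmul] using add_mem_lengthSet_add ih hx

theorem sum_mem_lengthSet_sum {ι : Type*} (s : Finset ι) {k : ι → ℕ} {x : ι → Multiset G}
    (h : ∀ i ∈ s, k i ∈ LengthSet H (x i)) : ∑ i ∈ s, k i ∈ LengthSet H (∑ i ∈ s, x i) := by
  classical
  induction s using Finset.induction_on with
  | empty => simpa using zero_mem_lengthSet_zero
  | insert i s hi ih =>
    rw [Finset.sum_insert hi, Finset.sum_insert hi]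
    exact add_mem_lengthSet_add (h i (Finset.mem_insert_self i s))
      (ih fun j hj => h j (Finset.mem_insert_of_mem hj))

theorem add_length_diff_mem_lengthSet [DecidableEq G] {l l₁ : List (Multiset G)}
    (hl : ∀ A ∈ l, IsPMAtom H A) (hsub : l₁.Subperm l) {k : ℕ} (hk : k ∈ LengthSet H l₁.sum) :
    k + (l.length - l₁.length) ∈ LengthSet H l.sum := by
  have hperm := List.subperm_append_diff_self_of_count_le (List.subperm_ext_iff.1 hsub)
  have hlen := hperm.length_eq
  rw [← hperm.sum_eq, List.sum_append, List.length_append] at *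
  convert add_mem_lengthSet_add hk
    (length_mem_lengthSet_sum fun A hA => hl A (hperm.subset (List.mem_append_right _ hA))) using 2
  omega

theorem IsPMAtom.eq_of_le [DecidableEq G] {A B : Multiset G} (hA : IsPMAtom H A) (hB : B ∈ H)
    (hB0 : B ≠ 0) (hle : B ≤ A) (hAB : A - B ∈ H) : A = B := by
  rcases hA.2.2 B (A - B) hB hAB (add_tsub_cancel_of_le hle).symm with h | h
  · exact absurd h hB0
  · exact le_antisymm (tsub_eq_zero_iff_le.1 h) hle

end LengthSet

section PMZS

variable {G : Type*} [AddCommGroup G] {G₀ : Set G}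

theorem two_le_card_of_mem_PMZS (h0 : (0 : G) ∉ G₀) {S : Multiset G} (hS : S ∈ PMZS G₀)
    (hS0 : S ≠ 0) : 2 ≤ card S := by
  by_contra! hlt
  obtain ⟨g, rfl⟩ : ∃ g, S = {g} := card_eq_one.1 (by have := card_pos.2 hS0; omega)
  obtain ⟨hG, S₁, S₂, h₁₂, hsum⟩ := hS
  have hcard : card S₁ + card S₂ = 1 := by rw [← card_add, ← h₁₂, card_singleton]
  have hg := hG g (mem_singleton_self g)
  -- one half is empty and the other is `{g}`, so the equal sums say `g = 0`
  rcases (by omega : card S₁ = 0 ∨ card S₂ = 0) with h | h <;> rw [card_eq_zero] at h <;>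
    subst h <;> simp only [zero_add, add_zero] at h₁₂ <;> subst h₁₂ <;> simp_all

theorem isPMAtom_of_card_eq_two (h0 : (0 : G) ∉ G₀) {A : Multiset G} (hA : A ∈ PMZS G₀)
    (hcard : card A = 2) : IsPMAtom (PMZS G₀) A := by
  refine ⟨hA, fun h => by simp [h] at hcard, fun B C hB hC hBC => ?_⟩
  by_contra! h
  have := two_le_card_of_mem_PMZS h0 hB h.1
  have := two_le_card_of_mem_PMZS h0 hC h.2
  rw [hBC, card_add] at hcard
  omega

theorem replicate_two_mem_PMZS {x : G} (hx : x ∈ G₀) : replicate 2 x ∈ PMZS G₀ :=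
  ⟨fun _ hg => (eq_of_mem_replicate hg) ▸ hx, {x}, {x}, rfl, rfl⟩

theorem isPMAtom_replicate_two (h0 : (0 : G) ∉ G₀) {x : G} (hx : x ∈ G₀) :
    IsPMAtom (PMZS G₀) (replicate 2 x) :=
  isPMAtom_of_card_eq_two h0 (replicate_two_mem_PMZS hx) (card_replicate 2 x)

end PMZS

namespace EvenOrderFamily

variable {G : Type*} [AddCommGroup G] {r : ℕ} {e : Fin r → G} {m : Fin r → ℕ}

local notation "e₀" => ∑ i, m i • e i
local notation "G₀" => insert e₀ (Set.range e)

theorem ne_zero (hord : ∀ i, addOrderOf (e i) = 2 * m i) (i : Fin r) : e i ≠ 0 := by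
  intro h
  have := hord i
  rw [h, addOrderOf_zero] at this
  omega

theorem injective (he : IsIndepFamily e) (hord : ∀ i, addOrderOf (e i) = 2 * m i) :
    Function.Injective e :=
  he.injective (ne_zero hord)

theorem eq_of_sum_nsmul_eq (he : IsIndepFamily e) (hord : ∀ i, addOrderOf (e i) = 2 * m i)
    {δ : Fin r → ℕ} (hδ : ∀ i, δ i ≤ 1) (h : e₀ = ∑ i, δ i • e i) : m = δ :=
  funext fun i => Nat.eq_of_modEq_two_mul_self (hδ i) <| by
    rw [← hord, ← nsmul_eq_nsmul_iff_modEq]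
    exact he.nsmul_eq_nsmul h i

theorem sum_nsmul_ne (he : IsIndepFamily e) (hord : ∀ i, addOrderOf (e i) = 2 * m i)
    (hsum : 2 ≤ ∑ i, m i) (j : Fin r) : e₀ ≠ e j := by
  intro h
  have := eq_of_sum_nsmul_eq he hord (δ := Pi.single j 1)
    (fun i => by by_cases h : i = j <;> simp [h]) (by simpa using h)
  simp [this] at hsum

theorem zero_notMem (he : IsIndepFamily e) (hord : ∀ i, addOrderOf (e i) = 2 * m i)
    (hsum : 2 ≤ ∑ i, m i) : (0 : G) ∉ G₀ := by
  rintro (h | ⟨i, h⟩)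
  · have := eq_of_sum_nsmul_eq he hord (δ := 0) (fun _ => zero_le_one) (by simp [← h])
    simp [this] at hsum
  · exact ne_zero hord i h

variable (e m) in
def seq (a : ℕ) (b : Fin r → ℕ) : Multiset G :=
  replicate a e₀ + ∑ i, replicate (b i) (e i)

theorem mem_of_mem_seq {a : ℕ} {b : Fin r → ℕ} {g : G} (hg : g ∈ seq e m a b) : g ∈ G₀ := by
  simp only [seq, mem_add, mem_replicate, Multiset.mem_sum, Finset.mem_univ, true_and] at hg
  rcases hg with ⟨-, rfl⟩ | ⟨i, -, rfl⟩
  · exact Set.mem_insert _ _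
  · exact Set.mem_insert_of_mem _ ⟨i, rfl⟩

theorem sum_seq (a : ℕ) (b : Fin r → ℕ) : (seq e m a b).sum = ∑ i, (a * m i + b i) • e i := by
  simp [seq, Multiset.sum_sum, Finset.smul_sum, add_smul, mul_smul, Finset.sum_add_distrib]

theorem card_seq (a : ℕ) (b : Fin r → ℕ) : card (seq e m a b) = a + ∑ i, b i := by
  simp [seq]

theorem seq_one_add_seq_one :
    seq e m 1 m + seq e m 1 m = replicate 2 e₀ + ∑ i, m i • replicate 2 (e i) := by
  simp only [seq, nsmul_replicate, add_add_add_comm, ← replicate_add, ← Finset.sum_add_distrib,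
    mul_two]

theorem sum_add_one_mem_lengthSet (he : IsIndepFamily e) (hord : ∀ i, addOrderOf (e i) = 2 * m i)
    (hsum : 2 ≤ ∑ i, m i) :
    1 + ∑ i, m i ∈ LengthSet (PMZS G₀) (seq e m 1 m + seq e m 1 m) := by
  have h0 := zero_notMem he hord hsum
  rw [seq_one_add_seq_one]
  refine add_mem_lengthSet_add (isPMAtom_replicate_two h0 (Set.mem_insert _ _)).one_mem_lengthSet
    (sum_mem_lengthSet_sum _ fun i _ => ?_)
  simpa using nsmul_mem_lengthSet_nsmul (m i)
    (isPMAtom_replicate_two h0 (Set.mem_insert_of_mem _ ⟨i, rfl⟩)).one_mem_lengthSet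

variable [DecidableEq G]

theorem count_e₀_seq (hne : ∀ j, e₀ ≠ e j) (a : ℕ) (b : Fin r → ℕ) :
    count e₀ (seq e m a b) = a := by
  simp [seq, count_replicate, Multiset.count_sum', fun i => Ne.symm (hne i)]

theorem count_e_seq (hinj : Function.Injective e) (hne : ∀ j, e₀ ≠ e j) (a : ℕ)
    (b : Fin r → ℕ) (j : Fin r) : count (e j) (seq e m a b) = b j := by
  simp [seq, count_replicate, Multiset.count_sum', hinj.eq_iff, hne j]

theorem eq_of_count_eq {S T : Multiset G} (hS : ∀ g ∈ S, g ∈ G₀) (hT : ∀ g ∈ T, g ∈ G₀)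
    (h₀ : count e₀ S = count e₀ T) (h : ∀ i, count (e i) S = count (e i) T) : S = T :=
  Multiset.eq_of_count_eq_on hS hT <| by simpa [Set.forall_mem_insert] using ⟨h₀, h⟩

theorem eq_zero_of_count_eq_zero {S : Multiset G} (hS : ∀ g ∈ S, g ∈ G₀) (h₀ : count e₀ S = 0)
    (h : ∀ i, count (e i) S = 0) : S = 0 :=
  eq_of_count_eq hS (by simp) (by simpa using h₀) (by simpa using h)

theorem sum_eq (hinj : Function.Injective e) (hne : ∀ j, e₀ ≠ e j) {S : Multiset G}
    (hS : ∀ g ∈ S, g ∈ G₀) : S.sum = ∑ i, (count e₀ S * m i + count (e i) S) • e i := by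
  rw [← sum_seq]
  congr 1
  exact eq_of_count_eq hS (fun _ => mem_of_mem_seq) (by rw [count_e₀_seq hne])
    fun i => by rw [count_e_seq hinj hne]

theorem mem_PMZS_iff (he : IsIndepFamily e) (hord : ∀ i, addOrderOf (e i) = 2 * m i)
    (hne : ∀ j, e₀ ≠ e j) {S : Multiset G} :
    S ∈ PMZS G₀ ↔
      (∀ g ∈ S, g ∈ G₀) ∧ ∀ i, ∃ c, count (e i) S = 2 * c + count e₀ S % 2 * m i := by
  have hinj := injective he hord
  constructor
  · rintro ⟨hS, S₁, S₂, rfl, h₁₂⟩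
    refine ⟨hS, fun i => ?_⟩
    have hS₁ : ∀ g ∈ S₁, g ∈ G₀ := fun g hg => hS g (mem_add.2 (Or.inl hg))
    have hS₂ : ∀ g ∈ S₂, g ∈ G₀ := fun g hg => hS g (mem_add.2 (Or.inr hg))
    rw [sum_eq hinj hne hS₁, sum_eq hinj hne hS₂] at h₁₂
    rw [count_add, count_add]
    apply Nat.exists_eq_two_mul_add_of_modEq
    rw [← hord i, ← nsmul_eq_nsmul_iff_modEq]
    exact he.nsmul_eq_nsmul h₁₂ i
  · rintro ⟨hS, hc⟩
    choose c hc using hc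
    set a := count e₀ S
    -- the extra `e₀` of the first half is balanced by `a % 2 * m i` extra `e i` in the second
    refine ⟨hS, seq e m (a / 2 + a % 2) c, seq e m (a / 2) (fun i => c i + a % 2 * m i), ?_, ?_⟩
    · refine eq_of_count_eq hS (fun g hg => ?_) ?_ fun i => ?_
      · rcases mem_add.1 hg with hg | hg <;> exact mem_of_mem_seq hg
      · rw [count_add, count_e₀_seq hne, count_e₀_seq hne]
        omega
      · rw [count_add, count_e_seq hinj hne, count_e_seq hinj hne, hc i]
        ring
    · rw [sum_seq, sum_seq]
      exact Finset.sum_congr rfl fun i _ => by congr 1; ring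

theorem sub_replicate_two_e₀_mem (he : IsIndepFamily e) (hord : ∀ i, addOrderOf (e i) = 2 * m i)
    (hne : ∀ j, e₀ ≠ e j) {S : Multiset G} (hS : S ∈ PMZS G₀) (h₂ : 2 ≤ count e₀ S) :
    S - replicate 2 e₀ ∈ PMZS G₀ := by
  obtain ⟨hS, hc⟩ := (mem_PMZS_iff he hord hne).1 hS
  refine (mem_PMZS_iff he hord hne).2 ⟨fun g hg => hS g (mem_of_le tsub_le_self hg), fun i => ?_⟩
  obtain ⟨c, hc⟩ := hc i
  refine ⟨c, ?_⟩
  simp only [count_sub, count_replicate_self, count_replicate, if_neg (hne i), Nat.sub_zero, hc]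
  rw [show (count e₀ S - 2) % 2 = count e₀ S % 2 by omega]

theorem sub_replicate_two_e_mem (he : IsIndepFamily e) (hord : ∀ i, addOrderOf (e i) = 2 * m i)
    (hne : ∀ j, e₀ ≠ e j) {S : Multiset G} (hS : S ∈ PMZS G₀) {j : Fin r}
    (h₂ : 2 + count e₀ S % 2 * m j ≤ count (e j) S) : S - replicate 2 (e j) ∈ PMZS G₀ := by
  have hinj := injective he hord
  obtain ⟨hS, hc⟩ := (mem_PMZS_iff he hord hne).1 hS
  refine (mem_PMZS_iff he hord hne).2 ⟨fun g hg => hS g (mem_of_le tsub_le_self hg), fun i => ?_⟩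
  obtain ⟨c, hc⟩ := hc i
  simp only [count_sub, count_replicate, if_neg (hne j).symm, Nat.sub_zero, hinj.eq_iff]
  rcases eq_or_ne j i with rfl | hij
  · exact ⟨c - 1, by rw [if_pos rfl]; omega⟩
  · exact ⟨c, by rw [if_neg hij, Nat.sub_zero, hc]⟩

theorem isPMAtom_cases (he : IsIndepFamily e) (hord : ∀ i, addOrderOf (e i) = 2 * m i)
    (hsum : 2 ≤ ∑ i, m i) {A : Multiset G} (hA : IsPMAtom (PMZS G₀) A) :
    (∃ x ∈ G₀, A = replicate 2 x) ∨ A = seq e m 1 m := by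
  have hne := sum_nsmul_ne he hord hsum
  have hinj := injective he hord
  obtain ⟨hAs, hc⟩ := (mem_PMZS_iff he hord hne).1 hA.1
  have split_off (x : G) (h₂ : 2 ≤ count x A) (hmem : A - replicate 2 x ∈ PMZS G₀) :
      ∃ x ∈ G₀, A = replicate 2 x := by
    have hx := hAs x (count_pos.1 (by omega))
    exact ⟨x, hx, hA.eq_of_le (replicate_two_mem_PMZS hx) (by simp)
      (le_count_iff_replicate_le.1 h₂) hmem⟩
  by_cases ha : 2 ≤ count e₀ A
  · exact Or.inl (split_off _ ha (sub_replicate_two_e₀_mem he hord hne hA.1 ha))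
  by_cases hb : ∃ j, 2 + count e₀ A % 2 * m j ≤ count (e j) A
  · obtain ⟨j, hj⟩ := hb
    exact Or.inl (split_off _ (by omega) (sub_replicate_two_e_mem he hord hne hA.1 hj))
  simp only [not_le, not_exists] at ha hb
  have hb' : ∀ i, count (e i) A = count e₀ A * m i := fun i => by
    obtain ⟨c, hc⟩ := hc i
    have := hb i
    rw [Nat.mod_eq_of_lt ha] at hc this
    omega
  obtain h | h : count e₀ A = 0 ∨ count e₀ A = 1 := by omega
  · exact absurd (eq_zero_of_count_eq_zero hAs h (by simp [hb', h])) hA.2.1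
  · exact Or.inr (eq_of_count_eq hAs (fun _ => mem_of_mem_seq) (by rw [count_e₀_seq hne, h])
      fun i => by rw [count_e_seq hinj hne, hb', h, one_mul])

theorem isPMAtom_seq_one (he : IsIndepFamily e) (hord : ∀ i, addOrderOf (e i) = 2 * m i)
    (hsum : 2 ≤ ∑ i, m i) : IsPMAtom (PMZS G₀) (seq e m 1 m) := by
  have hne := sum_nsmul_ne he hord hsum
  have hinj := injective he hord
  have hmem : seq e m 1 m ∈ PMZS G₀ := (mem_PMZS_iff he hord hne).2
    ⟨fun _ => mem_of_mem_seq, fun i => ⟨0, by rw [count_e₀_seq hne, count_e_seq hinj hne]; simp⟩⟩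
  refine ⟨hmem, fun h => by simpa [h] using count_e₀_seq hne 1 m, fun B C hB hC hBC => ?_⟩
  -- the factor containing `e₀` must contain at least `m i` copies of each `e i`
  have key (B C : Multiset G) (hB : B ∈ PMZS G₀) (hC : C ∈ PMZS G₀) (hBC : seq e m 1 m = B + C)
      (hB₀ : count e₀ B = 0) : B = 0 := by
    obtain ⟨hBs, -⟩ := (mem_PMZS_iff he hord hne).1 hB
    obtain ⟨-, hCc⟩ := (mem_PMZS_iff he hord hne).1 hC
    have h₀ := congrArg (count e₀) hBC
    rw [count_add, count_e₀_seq hne, hB₀, zero_add] at h₀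
    refine eq_zero_of_count_eq_zero hBs hB₀ fun i => ?_
    obtain ⟨c, hc⟩ := hCc i
    have hi := congrArg (count (e i)) hBC
    rw [count_add, count_e_seq hinj hne] at hi
    rw [← h₀, Nat.one_mod, one_mul] at hc
    omega
  have h₀ := congrArg (count e₀) hBC
  rw [count_add, count_e₀_seq hne] at h₀
  rcases (by omega : count e₀ B = 0 ∨ count e₀ C = 0) with h | h
  · exact Or.inl (key B C hB hC hBC h)
  · exact Or.inr (key C B hC hB (hBC.trans (add_comm B C)) h)

theorem card_and_count_of_isPMAtom (he : IsIndepFamily e)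
    (hord : ∀ i, addOrderOf (e i) = 2 * m i) (hsum : 2 ≤ ∑ i, m i) {A : Multiset G}
    (hA : IsPMAtom (PMZS G₀) A) :
    card A = 2 + (if A = seq e m 1 m then ∑ i, m i - 1 else 0) ∧
      count e₀ A % 2 = if A = seq e m 1 m then 1 else 0 := by
  have hne := sum_nsmul_ne he hord hsum
  rcases isPMAtom_cases he hord hsum hA with ⟨x, -, rfl⟩ | rfl
  · have hx : replicate 2 x ≠ seq e m 1 m := fun h => by
      have := congrArg (count e₀) h
      rw [count_replicate, count_e₀_seq hne] at this
      split_ifs at this; omega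
    simp only [card_replicate, if_neg hx, count_replicate]
    split_ifs <;> simp
  · simp [card_seq, count_e₀_seq hne]
    omega

theorem card_sum_and_count (he : IsIndepFamily e) (hord : ∀ i, addOrderOf (e i) = 2 * m i)
    (hsum : 2 ≤ ∑ i, m i) {l : List (Multiset G)} (hl : ∀ A ∈ l, IsPMAtom (PMZS G₀) A) :
    card l.sum = 2 * l.length + l.count (seq e m 1 m) * (∑ i, m i - 1) ∧
      count e₀ l.sum % 2 = l.count (seq e m 1 m) % 2 := by
  induction l with
  | nil => simp
  | cons A l ih =>
    obtain ⟨ih₁, ih₂⟩ := ih fun B hB => hl B (List.mem_cons_of_mem A hB)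
    obtain ⟨h₁, h₂⟩ := card_and_count_of_isPMAtom he hord hsum (hl A List.mem_cons_self)
    simp only [List.sum_cons, card_add, count_add, List.length_cons, List.count_cons, beq_iff_eq]
    split_ifs at h₁ h₂ ⊢ <;> simp only [add_mul, one_mul] <;> omega

theorem eq_of_mem_distSet (he : IsIndepFamily e) (hord : ∀ i, addOrderOf (e i) = 2 * m i)
    (hsum : 2 ≤ ∑ i, m i) {S : Multiset G} {d : ℕ}
    (hd : d ∈ DistSet (LengthSet (PMZS G₀) S)) : d = ∑ i, m i - 1 := by
  obtain ⟨hd, k, ⟨l, hl, rfl, rfl⟩, ⟨l', hl', hsum', hlen'⟩, hmin⟩ := hd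
  obtain ⟨hc, hp⟩ := card_sum_and_count he hord hsum hl
  obtain ⟨hc', hp'⟩ := card_sum_and_count he hord hsum hl'
  rw [hsum', hlen'] at hc'
  rw [hsum'] at hp'
  obtain ⟨hw, hdM⟩ :=
    Nat.two_le_and_le_of_two_mul_add_mul_eq (hc.symm.trans hc') (hp.symm.trans hp') hd
  -- trading two copies of `seq e m 1 m` in `l` for `1 + ∑ i, m i` atoms
  have hlonger : 1 + ∑ i, m i + (l.length - 2) ∈ LengthSet (PMZS G₀) l.sum :=
    add_length_diff_mem_lengthSet hl (List.replicate_sublist_iff.2 hw).subperm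
      (by simpa using sum_add_one_mem_lengthSet he hord hsum)
  have hlen := List.count_le_length (a := seq e m 1 m) (l := l)
  have := hmin _ hlonger (by omega)
  omega

theorem sub_one_mem_distSet (he : IsIndepFamily e) (hord : ∀ i, addOrderOf (e i) = 2 * m i)
    (hsum : 2 ≤ ∑ i, m i) :
    ∑ i, m i - 1 ∈ DistSet (LengthSet (PMZS G₀) (seq e m 1 m + seq e m 1 m)) := by
  have hne := sum_nsmul_ne he hord hsum
  have hW := (isPMAtom_seq_one he hord hsum).one_mem_lengthSet
  refine ⟨by omega, 2, add_mem_lengthSet_add hW hW, ?_, ?_⟩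
  · convert sum_add_one_mem_lengthSet he hord hsum using 1
    omega
  · rintro k ⟨l, hl, hlsum, rfl⟩ hk
    obtain ⟨hc, hp⟩ := card_sum_and_count he hord hsum hl
    rw [hlsum, card_add, card_seq] at hc
    rw [hlsum, count_add, count_e₀_seq hne] at hp
    rcases Nat.eq_zero_or_pos (l.count (seq e m 1 m)) with h₀ | hpos
    · rw [h₀] at hc
      omega
    · have := Nat.mul_le_mul_right (∑ i, m i - 1) (show 2 ≤ l.count (seq e m 1 m) by omega)
      omega

end EvenOrderFamily

theorem stmt_13_general (G : Type*) [AddCommGroup G] (r : ℕ) (e : Fin r → G)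
    (m : Fin r → ℕ) (he : IsIndepFamily e)
    (hord : ∀ i, addOrderOf (e i) = 2 * m i) (hsum : 2 ≤ ∑ i, m i) :
    DeltaM (PMZS (insert (∑ i, m i • e i) (Set.range e))) = {(∑ i, m i) - 1} := by
  classical
  ext d
  constructor
  · rintro ⟨S, -, hd⟩
    exact EvenOrderFamily.eq_of_mem_distSet he hord hsum hd
  · rintro rfl
    have hW := (EvenOrderFamily.isPMAtom_seq_one he hord hsum).1
    exact ⟨_, (PMZS _).add_mem hW hW, EvenOrderFamily.sub_one_mem_distSet he hord hsum⟩

/-- Let `G` be a finite abelian group, `e₁, …, e_r` independent elements of even orders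
`2m_i` with `m₁ + … + m_r ≥ 2`, and `e₀ = m₁e₁ + … + m_re_r`. Then
`Δ(B±({e₀, e₁, …, e_r})) = {m₁ + … + m_r - 1}`. -/
theorem stmt_13 (G : Type*) [AddCommGroup G] [Finite G] (r : ℕ) (e : Fin r → G)
    (m : Fin r → ℕ) (he : IsIndepFamily e)
    (hord : ∀ i, addOrderOf (e i) = 2 * m i) (hsum : 2 ≤ ∑ i, m i) :
    DeltaM (PMZS (insert (∑ i, m i • e i) (Set.range e))) = {(∑ i, m i) - 1} :=
  stmt_13_general G r e m he hord hsum
end
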